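/- A rooted labeled forest that avoids the pattern 132 avoids the pattern 2314 if and only if it is a P₁-forest. -/

import Mathlib

/-!
Let `u` be the ceiling of a special vertex `v`, witnessed by `u, v₂, v₃, v`. In a
`132`-avoiding forest, `L(u) < L(v)` forces `L(v₃) < L(u) < L(v₂) < L(v)`, so `u v₂ v₃ v` is an
instance of `2314`. Conversely, in an instance `x₁ x₂ x₃ x₄` of `2314` the vertex `x₄` is
special, and once its ceiling `u` has `L(u) > L(x₄)`, the least ancestor of `x₁`, `u` and `x₄`
form a `132`.
-/

/-- A rooted labeled forest on `[n]`: vertices are identified with their labels in `Fin n`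
(`i : Fin n` representing the label `i+1`), each vertex has an optional parent, and the
parent relation is acyclic. Components are rooted at the vertices with no parent, and
children are unordered since only the parent function is recorded. -/
structure RForest (n : ℕ) where
  parent : Fin n → Option (Fin n)
  acyclic : ∀ v : Fin n, ¬ Relation.TransGen (fun a b => parent b = some a) v v

namespace RForest

variable {n : ℕ}

/-- `u` is a strict ancestor of `v`. -/
def SAnc (F : RForest n) (u v : Fin n) : Prop :=
  Relation.TransGen (fun a b => F.parent b = some a) u v

/-- `u` is an ancestor of `v` (possibly `u = v`). -/
def Anc (F : RForest n) (u v : Fin n) : Prop :=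
  F.SAnc u v ∨ u = v

/-- `F` is a tree: it has exactly one root, i.e. exactly one component. -/
def IsTree (F : RForest n) : Prop :=
  ∃! r : Fin n, F.parent r = none

end RForest

/-- A pattern of length `k` is a permutation of `[k]` (presented 0-indexed on `Fin k`). -/
abbrev Pattern (k : ℕ) := Equiv.Perm (Fin k)

/-- The complement of a pattern: `π̄(i) = k + 1 - π(i)` in 1-indexed terms. -/
def Pattern.compl {k : ℕ} (π : Pattern k) : Pattern k :=
  π.trans ⟨Fin.rev, Fin.rev, Fin.rev_rev, Fin.rev_rev⟩

/-- `F` contains a (classical) instance of the pattern `π`: vertices `v 0, …, v (k-1)`,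
each a strict ancestor of the next, whose labels are in the same relative order as `π`. -/
def ContainsPat {n k : ℕ} (F : RForest n) (π : Pattern k) : Prop :=
  ∃ v : Fin k → Fin n,
    (∀ i j : Fin k, i < j → F.SAnc (v i) (v j)) ∧
    (∀ i j : Fin k, v i < v j ↔ π i < π j)

/-- `v` is a consecutive instance of `π` in `F`: a downward path (each vertex the parent of
the next) whose labels are in the same relative order as `π`. -/
def IsConsInstance {n k : ℕ} (F : RForest n) (π : Pattern k) (v : Fin k → Fin n) : Prop :=
  (∀ i j : Fin k, (j : ℕ) = (i : ℕ) + 1 → F.parent (v j) = some (v i)) ∧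
  (∀ i j : Fin k, v i < v j ↔ π i < π j)

/-- `F` contains a consecutive instance of `π`. -/
def CContainsPat {n k : ℕ} (F : RForest n) (π : Pattern k) : Prop :=
  ∃ v, IsConsInstance F π v

/-- `F` avoids every pattern in the set `S` (of patterns of arbitrary lengths). -/
def AvoidsSet {n : ℕ} (F : RForest n) (S : Set ((k : ℕ) × Pattern k)) : Prop :=
  ∀ p ∈ S, ¬ ContainsPat F p.2

/-- `f_n(S)`: the number of rooted labeled forests on `[n]` avoiding `S`. -/
noncomputable def fCount (S : Set ((k : ℕ) × Pattern k)) (n : ℕ) : ℕ :=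
  Nat.card {F : RForest n // AvoidsSet F S}

/-- `t_n(S)`: the number of rooted labeled trees on `[n]` avoiding `S`. -/
noncomputable def tCount (S : Set ((k : ℕ) × Pattern k)) (n : ℕ) : ℕ :=
  Nat.card {F : RForest n // F.IsTree ∧ AvoidsSet F S}

/-- The number of rooted labeled forests on `[n]` consecutively avoiding `π`. -/
noncomputable def cCount {k : ℕ} (π : Pattern k) (n : ℕ) : ℕ :=
  Nat.card {F : RForest n // ¬ CContainsPat F π}

/-- c-forest-Wilf equivalence of two patterns. -/
def CForestWilfEquiv {k k' : ℕ} (π : Pattern k) (π' : Pattern k') : Prop :=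
  ∀ n : ℕ, cCount π n = cCount π' n

def p123 : Pattern 3 := 1
def p132 : Pattern 3 := ⟨![0, 2, 1], ![0, 2, 1], by intro x; fin_cases x <;> rfl, by intro x; fin_cases x <;> rfl⟩
def p213 : Pattern 3 := ⟨![1, 0, 2], ![1, 0, 2], by intro x; fin_cases x <;> rfl, by intro x; fin_cases x <;> rfl⟩
def p231 : Pattern 3 := ⟨![1, 2, 0], ![2, 0, 1], by intro x; fin_cases x <;> rfl, by intro x; fin_cases x <;> rfl⟩
def p312 : Pattern 3 := ⟨![2, 0, 1], ![1, 2, 0], by intro x; fin_cases x <;> rfl, by intro x; fin_cases x <;> rfl⟩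
def p321 : Pattern 3 := ⟨![2, 1, 0], ![2, 1, 0], by intro x; fin_cases x <;> rfl, by intro x; fin_cases x <;> rfl⟩
def p2413 : Pattern 4 := ⟨![1, 3, 0, 2], ![2, 0, 3, 1], by intro x; fin_cases x <;> rfl, by intro x; fin_cases x <;> rfl⟩
def p2314 : Pattern 4 := ⟨![1, 2, 0, 3], ![2, 0, 1, 3], by intro x; fin_cases x <;> rfl, by intro x; fin_cases x <;> rfl⟩
def p3142 : Pattern 4 := ⟨![2, 0, 3, 1], ![1, 3, 0, 2], by intro x; fin_cases x <;> rfl, by intro x; fin_cases x <;> rfl⟩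
def p3124 : Pattern 4 := ⟨![2, 0, 1, 3], ![1, 2, 0, 3], by intro x; fin_cases x <;> rfl, by intro x; fin_cases x <;> rfl⟩

/-- A top-down minimum: every ancestor has label at least `L(v)`. -/
def TDM {n : ℕ} (F : RForest n) (v : Fin n) : Prop :=
  ∀ u : Fin n, F.Anc u v → v ≤ u

/-- A special vertex: a non-TDM vertex `v` such that the path from the root to `v`
contains `v₁, v₂, v₃, v₄ = v` in that order, with `v₁, v₃` TDM and `v₂, v₄` non-TDM. -/
def SpecialV {n : ℕ} (F : RForest n) (v : Fin n) : Prop :=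
  ¬ TDM F v ∧ ∃ v₁ v₂ v₃ : Fin n, TDM F v₁ ∧ ¬ TDM F v₂ ∧ TDM F v₃ ∧
    F.Anc v₁ v₂ ∧ F.Anc v₂ v₃ ∧ F.Anc v₃ v

/-- `u` is an ancestor of `v` such that the path from `u` to `v` contains
`v₁ = u, v₂, v₃, v₄ = v` in that order, with `v₁, v₃` TDM and `v₂, v₄` non-TDM. -/
def CeilCand {n : ℕ} (F : RForest n) (u v : Fin n) : Prop :=
  TDM F u ∧ ∃ v₂ v₃ : Fin n, ¬ TDM F v₂ ∧ TDM F v₃ ∧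
    F.Anc u v₂ ∧ F.Anc v₂ v₃ ∧ F.Anc v₃ v

/-- `u` is the ceiling of the special vertex `v`: the lowest ancestor with the above
property (every other candidate is an ancestor of `u`). -/
def IsCeiling {n : ℕ} (F : RForest n) (u v : Fin n) : Prop :=
  CeilCand F u v ∧ ∀ u' : Fin n, CeilCand F u' v → F.Anc u' u

/-- A `P₁`-forest: every special vertex `v` with ceiling `u` satisfies `L(u) > L(v)`. -/
def IsP1 {n : ℕ} (F : RForest n) : Prop :=
  ∀ v u : Fin n, SpecialV F v → IsCeiling F u v → v < u

/-- The segment of a vertex `v`: the TDM ancestors `u` of `v` with `L(u) < L(v)`. -/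
def Segment {n : ℕ} (F : RForest n) (v : Fin n) : Set (Fin n) :=
  {u | TDM F u ∧ F.Anc u v ∧ u < v}

/-- `u` is the top of the segment of `v`: the element of the segment of least label. -/
def IsTopOf {n : ℕ} (F : RForest n) (u v : Fin n) : Prop :=
  u ∈ Segment F v ∧ ∀ w ∈ Segment F v, u ≤ w

/-- A `P₂`-forest: whenever two comparable non-TDM vertices have intersecting segments,
the tops of their segments coincide. -/
def IsP2 {n : ℕ} (F : RForest n) : Prop :=
  ∀ v w : Fin n, ¬ TDM F v → ¬ TDM F w → (F.Anc v w ∨ F.Anc w v) →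
    (Segment F v ∩ Segment F w).Nonempty →
    ∀ a b : Fin n, IsTopOf F a v → IsTopOf F b w → a = b


namespace RForest

variable {n : ℕ} {F : RForest n} {a b u v w : Fin n}

theorem SAnc.trans (h₁ : F.SAnc u v) (h₂ : F.SAnc v w) : F.SAnc u w :=
  Relation.TransGen.trans h₁ h₂

theorem SAnc.ne (h : F.SAnc u v) : u ≠ v := by
  rintro rfl
  exact F.acyclic u h

theorem SAnc.anc (h : F.SAnc u v) : F.Anc u v := Or.inl h

theorem Anc.refl (u : Fin n) : F.Anc u u := Or.inr rfl

theorem anc_iff_reflTransGen :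
    F.Anc u v ↔ Relation.ReflTransGen (fun a b => F.parent b = some a) u v := by
  rw [Relation.reflTransGen_iff_eq_or_transGen, Anc, SAnc, or_comm, eq_comm]

theorem Anc.trans (h₁ : F.Anc u v) (h₂ : F.Anc v w) : F.Anc u w :=
  anc_iff_reflTransGen.mpr ((anc_iff_reflTransGen.mp h₁).trans (anc_iff_reflTransGen.mp h₂))

theorem Anc.sanc_of_ne (h : F.Anc u v) (hne : u ≠ v) : F.SAnc u v :=
  h.resolve_right hne

theorem anc_total_of_sanc (ha : F.SAnc a v) : ∀ {b}, F.SAnc b v → F.Anc a b ∨ F.Anc b a := by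
  induction ha with
  | single hav =>
    intro b hb
    obtain ⟨c, hbc, hcv⟩ := Relation.TransGen.tail'_iff.mp hb
    cases Option.some.inj (hcv.symm.trans hav)
    exact Or.inr (anc_iff_reflTransGen.mpr hbc)
  | tail hac hcv ih =>
    intro b hb
    obtain ⟨c, hbc, hc⟩ := Relation.TransGen.tail'_iff.mp hb
    cases Option.some.inj (hc.symm.trans hcv)
    rcases Relation.reflTransGen_iff_eq_or_transGen.mp hbc with rfl | hbc
    · exact Or.inl (Or.inl hac)
    · exact ih hbc

theorem Anc.total (ha : F.Anc a v) (hb : F.Anc b v) : F.Anc a b ∨ F.Anc b a := by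
  rcases ha with ha | rfl
  · rcases hb with hb | rfl
    · exact anc_total_of_sanc ha hb
    · exact Or.inl ha.anc
  · exact Or.inr hb

end RForest

section

variable {n : ℕ} {F : RForest n} {a m u v w x y z : Fin n}

theorem not_tdm_iff : ¬ TDM F v ↔ ∃ u, F.Anc u v ∧ u < v := by
  simp [TDM]

theorem exists_isLeast_anc (F : RForest n) (v : Fin n) : ∃ m, IsLeast {u | F.Anc u v} m := by
  obtain ⟨m, hm, hmin⟩ := Set.exists_min_image {u | F.Anc u v} id (Set.toFinite _) ⟨v, .refl v⟩
  exact ⟨m, hm, hmin⟩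

theorem tdm_of_isLeast_anc (hm : IsLeast {u | F.Anc u v} m) : TDM F m :=
  fun _ hu => hm.2 (hu.trans hm.1)

theorem lt_of_isLeast_anc (hm : IsLeast {u | F.Anc u v} m) (hv : ¬ TDM F v) : m < v := by
  obtain ⟨u, hu, huv⟩ := not_tdm_iff.mp hv
  exact (hm.2 hu).trans_lt huv

theorem CeilCand.anc (h : CeilCand F u v) : F.Anc u v := by
  obtain ⟨-, v₂, v₃, -, -, hu₂, h₂₃, h₃v⟩ := h
  exact (hu₂.trans h₂₃).trans h₃v

theorem SpecialV.of_ceilCand (hv : ¬ TDM F v) (hu : CeilCand F u v) : SpecialV F v := by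
  obtain ⟨hu, v₂, v₃, h⟩ := hu
  exact ⟨hv, u, v₂, v₃, hu, h⟩

/-- Candidates all lie on the root path of `v`, so they are totally ordered by ancestry; take
one that is minimal for the well-founded relation "strictly below". -/
theorem exists_isCeiling (ha : CeilCand F a v) : ∃ u, IsCeiling F u v := by
  have : IsTrans (Fin n) (fun x y => F.SAnc y x) := ⟨fun _ _ _ h₁ h₂ => h₂.trans h₁⟩
  have : Std.Irrefl (fun x y : Fin n => F.SAnc y x) := ⟨fun x => F.acyclic x⟩
  obtain ⟨u, hu, hlow⟩ := (Finite.wellFounded_of_trans_of_irrefl (fun x y => F.SAnc y x)).has_min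
    {u | CeilCand F u v} ⟨a, ha⟩
  refine ⟨u, hu, fun u' (hu' : CeilCand F u' v) => ?_⟩
  rcases hu'.anc.total hu.anc with h | h
  · exact h
  · rcases h with h | rfl
    · exact absurd h (hlow u' hu')
    · exact .refl u

/-- The least ancestor `m` of `v₂` is a TDM, hence a candidate and an ancestor of the ceiling;
as the ceiling is a TDM, its label is at most `L(m) < L(v₂)`. -/
theorem IsCeiling.lt_of_not_tdm {v₂ v₃ : Fin n} (hu : IsCeiling F u v) (h₂ : ¬ TDM F v₂)
    (h₃ : TDM F v₃) (h₂₃ : F.Anc v₂ v₃) (h₃v : F.Anc v₃ v) : u < v₂ := by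
  obtain ⟨m, hm⟩ := exists_isLeast_anc F v₂
  have hcand : CeilCand F m v := ⟨tdm_of_isLeast_anc hm, v₂, v₃, h₂, h₃, hm.1, h₂₃, h₃v⟩
  exact (hu.1.1 m (hu.2 m hcand)).trans_lt (lt_of_isLeast_anc hm h₂)

theorem containsPat_p132_of (hxy : F.SAnc x y) (hyz : F.SAnc y z) (hxz : x < z) (hzy : z < y) :
    ContainsPat F p132 := by
  refine ⟨![x, y, z], ?_, ?_⟩
  · simp [Fin.forall_fin_succ, hxy, hyz, hxy.trans hyz]
  · simp [Fin.forall_fin_succ, p132]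
    omega

theorem containsPat_p2314_iff : ContainsPat F p2314 ↔ ∃ x₁ x₂ x₃ x₄, F.SAnc x₁ x₂ ∧
    F.SAnc x₂ x₃ ∧ F.SAnc x₃ x₄ ∧ x₃ < x₁ ∧ x₁ < x₂ ∧ x₂ < x₄ := by
  constructor
  · rintro ⟨x, hanc, hord⟩
    refine ⟨x 0, x 1, x 2, x 3, hanc 0 1 (by decide), hanc 1 2 (by decide),
      hanc 2 3 (by decide), ?_⟩
    simp [hord, p2314]
  · rintro ⟨x₁, x₂, x₃, x₄, h₁₂, h₂₃, h₃₄, o₃₁, o₁₂, o₂₄⟩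
    refine ⟨![x₁, x₂, x₃, x₄], ?_, ?_⟩
    · simp [Fin.forall_fin_succ, h₁₂, h₂₃, h₃₄, h₁₂.trans h₂₃, h₂₃.trans h₃₄,
        (h₁₂.trans h₂₃).trans h₃₄]
    · simp [Fin.forall_fin_succ, p2314]
      omega

theorem lt_of_not_containsPat_p132 (h : ¬ ContainsPat F p132) (hxy : F.SAnc x y)
    (hyz : F.SAnc y z) (hxz : x < z) : y < z := by
  by_contra! hzy
  exact h (containsPat_p132_of hxy hyz hxz (hzy.lt_of_ne hyz.ne.symm))

theorem anc_of_not_containsPat_p132 (h : ¬ ContainsPat F p132) (hyz : F.SAnc y z)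
    (hwz : F.Anc w z) (hw : w ≤ z) (hzy : z < y) : F.Anc y w := by
  refine (hwz.total hyz.anc).resolve_left fun hwy' => ?_
  have hwy : F.SAnc w y := hwy'.sanc_of_ne (hw.trans_lt hzy).ne
  exact (lt_of_not_containsPat_p132 h hwy hyz (hw.lt_of_ne (hwy.trans hyz).ne)).asymm hzy

theorem isP1_of_not_containsPat_p2314 (h132 : ¬ ContainsPat F p132)
    (h2314 : ¬ ContainsPat F p2314) : IsP1 F := by
  rintro v u ⟨hv, -⟩ hu
  by_contra! huv
  obtain ⟨hut, v₂, v₃, h₂, h₃, hu₂, h₂₃, h₃v⟩ := hu.1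
  have s₁₂ : F.SAnc u v₂ := hu₂.sanc_of_ne fun e => h₂ (e ▸ hut)
  have s₂₃ : F.SAnc v₂ v₃ := h₂₃.sanc_of_ne fun e => h₂ (e ▸ h₃)
  have s₃₄ : F.SAnc v₃ v := h₃v.sanc_of_ne fun e => hv (e ▸ h₃)
  have o₃₁ : v₃ < u := (h₃ u (s₁₂.trans s₂₃).anc).lt_of_ne (s₁₂.trans s₂₃).ne.symm
  have o₁₂ : u < v₂ := hu.lt_of_not_tdm h₂ h₃ h₂₃ h₃v
  have o₂₄ : v₂ < v := lt_of_not_containsPat_p132 h132 s₁₂ (s₂₃.trans s₃₄)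
    (huv.lt_of_ne (s₁₂.trans (s₂₃.trans s₃₄)).ne)
  exact h2314 (containsPat_p2314_iff.mpr ⟨u, v₂, v₃, v, s₁₂, s₂₃, s₃₄, o₃₁, o₁₂, o₂₄⟩)

/-- In an instance `x₁ x₂ x₃ x₄` of `2314`, the least ancestor of `x₁` is a ceiling candidate
for `x₄`, witnessed by `x₂` and the least ancestor of `x₃`. -/
theorem not_containsPat_p2314_of_isP1 (h132 : ¬ ContainsPat F p132) (hP1 : IsP1 F) :
    ¬ ContainsPat F p2314 := by
  rw [containsPat_p2314_iff]
  rintro ⟨x₁, x₂, x₃, x₄, s₁₂, s₂₃, s₃₄, o₃₁, o₁₂, o₂₄⟩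
  obtain ⟨a, ha⟩ := exists_isLeast_anc F x₁
  obtain ⟨t, ht⟩ := exists_isLeast_anc F x₃
  have h₂t : F.Anc x₂ t :=
    anc_of_not_containsPat_p132 h132 s₂₃ ht.1 (ht.2 (.refl x₃)) (o₃₁.trans o₁₂)
  have h₂ : ¬ TDM F x₂ := not_tdm_iff.mpr ⟨x₁, s₁₂.anc, o₁₂⟩
  have h₄ : ¬ TDM F x₄ := not_tdm_iff.mpr ⟨x₃, s₃₄.anc, o₃₁.trans (o₁₂.trans o₂₄)⟩
  have hcand : CeilCand F a x₄ := ⟨tdm_of_isLeast_anc ha, x₂, t, h₂, tdm_of_isLeast_anc ht,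
    ha.1.trans s₁₂.anc, h₂t, ht.1.trans s₃₄.anc⟩
  obtain ⟨u, hu⟩ := exists_isCeiling hcand
  have o₄u : x₄ < u := hP1 x₄ u (.of_ceilCand h₄ hcand) hu
  have oa₄ : a < x₄ := (ha.2 (.refl x₁)).trans_lt (o₁₂.trans o₂₄)
  have hau : F.SAnc a u := (hu.2 a hcand).sanc_of_ne (oa₄.trans o₄u).ne
  exact (lt_of_not_containsPat_p132 h132 hau (hu.1.anc.sanc_of_ne o₄u.ne') oa₄).asymm o₄u

end

/-- A `132`-avoiding forest avoids `2314` if and only if it is a `P₁`-forest. -/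
theorem avoid132_avoid2314_iff_P1 {n : ℕ} (F : RForest n) (h : ¬ ContainsPat F p132) :
    ¬ ContainsPat F p2314 ↔ IsP1 F :=
  ⟨isP1_of_not_containsPat_p2314 h, not_containsPat_p2314_of_isP1 h⟩
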